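/- arXiv:2210.01653 — 5 statements merged into one kernel-verified Lean document; each statement's English description precedes it below -/
import Mathlib

section
/- Let n ≥ 2 and let f : {0,…,n} → ℝ≥0 satisfy ∑_{k=0}^n C(n,k) f(k) = 1. Then ∑_{k=0}^n a_{n,k} f(k) ≥ r_{⌈n/2⌉}, where a_{n,k} = C(n−2,k) + C(n−2,k−2) and r_k = a_{n,k}/C(n,k). -/
/-!
`a_{n,k} = C(n-2,k) + C(n-2,k-2)` counts the `k`-subsets of `{1,…,n}` containing both or neither
of two fixed points, so `r_k = a_{n,k} / C(n,k) = ((n-k)(n-k-1) + k(k-1)) / (n(n-1))` is the chance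
that a random `k`-subset does not separate them. This quadratic in `k` is minimal over the integers
at `k = ⌈n/2⌉`, and `∑ a_{n,k} f(k) = ∑ r_k · C(n,k) f(k)` is an average of the `r_k` with the
weights `C(n,k) f(k)`.
-/

open Finset

def sameSideCount (n k : ℕ) : ℕ :=
  (n - 2).choose k + if 2 ≤ k then (n - 2).choose (k - 2) else 0

def sameSideWeight (n k : ℕ) : ℝ :=
  ((n : ℝ) - k) * ((n : ℝ) - k - 1) + (k : ℝ) * ((k : ℝ) - 1)

lemma cast_choose_mul_succ (m k : ℕ) :
    (m.choose k : ℝ) * (m + 1) = (m + 1).choose k * (m + 1 - k) := by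
  rcases le_or_gt k (m + 1) with hk | hk
  · have hsub : ((m + 1 - k : ℕ) : ℝ) = m + 1 - k := by push_cast [Nat.cast_sub hk]; ring
    rw [← hsub]
    exact_mod_cast Nat.choose_mul_succ_eq m k
  · simp [Nat.choose_eq_zero_of_lt hk, Nat.choose_eq_zero_of_lt (by omega : m < k)]

lemma cast_choose_mul_add_two (m k : ℕ) :
    (m.choose k : ℝ) * ((m + 2) * (m + 1)) = (m + 2).choose k * ((m + 2 - k) * (m + 1 - k)) := by
  have h₁ := cast_choose_mul_succ m k
  have h₂ : ((m + 1).choose k : ℝ) * (m + 2) = (m + 2).choose k * (m + 2 - k) := by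
    simpa [add_assoc, one_add_one_eq_two] using cast_choose_mul_succ (m + 1) k
  linear_combination (m + 2 : ℝ) * h₁ + (m + 1 - (k : ℝ)) * h₂

lemma cast_choose_add_two_mul (m j : ℕ) :
    (m.choose j : ℝ) * ((m + 2) * (m + 1)) = (m + 2).choose (j + 2) * ((j + 2) * (j + 1)) := by
  have h₁ := Nat.add_one_mul_choose_eq m j
  have h₂ := Nat.add_one_mul_choose_eq (m + 1) (j + 1)
  rify at h₁ h₂
  linear_combination (m + 2 : ℝ) * h₁ + (j + 1 : ℝ) * h₂

lemma cast_sameSideCount_mul (n k : ℕ) (hn : 2 ≤ n) :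
    (sameSideCount n k : ℝ) * (n * (n - 1)) = n.choose k * sameSideWeight n k := by
  obtain ⟨m, rfl⟩ := Nat.exists_eq_add_of_le' hn
  have hpair : ((if 2 ≤ k then m.choose (k - 2) else 0 : ℕ) : ℝ) * ((m + 2) * (m + 1)) =
      (m + 2).choose k * (k * (k - 1)) := by
    split_ifs with hk
    · obtain ⟨j, rfl⟩ := Nat.exists_eq_add_of_le' hk
      rw [Nat.add_sub_cancel, cast_choose_add_two_mul]
      push_cast
      ring
    · interval_cases k <;> simp
  simp only [sameSideCount, sameSideWeight, Nat.add_sub_cancel]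
  push_cast at hpair ⊢
  linear_combination cast_choose_mul_add_two m k + hpair

lemma sameSideWeight_half_le (n k : ℕ) : sameSideWeight n ((n + 1) / 2) ≤ sameSideWeight n k := by
  set m := (n + 1) / 2
  have hm : (n : ℝ) ≤ 2 * m ∧ 2 * (m : ℝ) ≤ n + 1 := by
    constructor <;> norm_cast <;> omega
  -- the difference is `2 (k - m) (k + m - n)`, and both factors have the same sign
  suffices 0 ≤ ((k : ℝ) - m) * (k + m - n) by
    unfold sameSideWeight; nlinarith
  rcases lt_trichotomy k m with h | rfl | h
  · have : (k : ℝ) + 1 ≤ m := by exact_mod_cast h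
    exact mul_nonneg_of_nonpos_of_nonpos (by linarith) (by linarith)
  · simp
  · have : (m : ℝ) + 1 ≤ k := by exact_mod_cast h
    exact mul_nonneg (by linarith) (by linarith)

lemma le_sum_mul_of_sum_eq_one {ι R : Type*} [CommSemiring R] [PartialOrder R] [IsOrderedRing R]
    {s : Finset ι} {w ρ : ι → R} {t : R} (hw : ∀ i ∈ s, 0 ≤ w i) (hρ : ∀ i ∈ s, t ≤ ρ i)
    (h : ∑ i ∈ s, w i = 1) : t ≤ ∑ i ∈ s, ρ i * w i :=
  calc t = ∑ i ∈ s, t * w i := by rw [← mul_sum, h, mul_one]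
    _ ≤ ∑ i ∈ s, ρ i * w i := sum_le_sum fun i hi => mul_le_mul_of_nonneg_right (hρ i hi) (hw i hi)

theorem stmt_11 (n : ℕ) (hn : 2 ≤ n)
    (a : ℕ → ℕ)
    (ha : ∀ k, a k = Nat.choose (n - 2) k + if 2 ≤ k then Nat.choose (n - 2) (k - 2) else 0)
    (r : ℕ → ℝ) (hr : ∀ k, r k = (a k : ℝ) / (Nat.choose n k : ℝ))
    (f : ℕ → ℝ) (hf : ∀ k, 0 ≤ f k)
    (h1 : ∑ k ∈ range (n + 1), (Nat.choose n k : ℝ) * f k = 1) :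
    ∑ k ∈ range (n + 1), (a k : ℝ) * f k ≥ r ((n + 1) / 2) := by
  obtain rfl : a = sameSideCount n := funext ha
  have hN : (0 : ℝ) < n * (n - 1) := by
    have : (2 : ℝ) ≤ n := by exact_mod_cast hn
    nlinarith
  have hcount (k : ℕ) : (sameSideCount n k : ℝ) = n.choose k * (sameSideWeight n k / (n * (n - 1))) := by
    rw [mul_div_assoc', eq_div_iff hN.ne', cast_sameSideCount_mul n k hn]
  have hr_half : r ((n + 1) / 2) = sameSideWeight n ((n + 1) / 2) / (n * (n - 1)) := by
    rw [hr, hcount, mul_div_cancel_left₀]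
    exact_mod_cast (Nat.choose_pos (by omega)).ne'
  rw [ge_iff_le, hr_half]
  refine (le_sum_mul_of_sum_eq_one (w := fun k => (n.choose k : ℝ) * f k)
    (fun k _ => mul_nonneg (Nat.cast_nonneg _) (hf k))
    (fun k _ => div_le_div_of_nonneg_right (sameSideWeight_half_le n k) hN.le) h1).trans_eq
    (sum_congr rfl fun k _ => ?_)
  rw [hcount]
  ring
end

section
/- Let n = 2m−1 be odd, m ≥ 2, and define f by f(m−1) = f(m) = 1/(2·C(n,m)) and f(k) = 0 otherwise. Then ∑_{k=0}^n C(n,k) f(k) = 1, ∑_{k=0}^n C(n−1,k) f(k) = 1/2, and ∑_{k=0}^n a_{n,k} f(k) = (n−1)/(2n), where a_{n,k} = C(n−2,k) + C(n−2,k−2). -/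
open Finset

/-! Since `f` is supported on `{m - 1, m}`, each sum is a pair of coefficients divided by
`2 C(n, m)`. For odd `n = 2m - 1` the symmetry `C(n, m - 1) = C(n, m)` gives the first sum and
Pascal's rule the second. For the third, `a_{n,k} = C(n, k) - 2 C(n - 2, k - 1)`, so the pair sums
to `2 C(n, m) - 2 C(n - 1, m - 1)`, and `n C(n - 1, m - 1) = m C(n, m)` turns the quotient into
`1 - m / n = (n - 1) / (2n)`. -/

theorem Finset.sum_mul_eq_of_support_pair {ι R : Type*} [DecidableEq ι]
    [NonUnitalNonAssocSemiring R] {s : Finset ι} {p q : ι} (hp : p ∈ s) (hq : q ∈ s)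
    (hpq : p ≠ q) (g f : ι → R) (c : R) (hf : ∀ k, f k = if k = p ∨ k = q then c else 0) :
    ∑ k ∈ s, g k * f k = (g p + g q) * c := by
  rw [← sum_subset (insert_subset hp (singleton_subset_iff.mpr hq)), sum_pair hpq, hf, hf,
    if_pos (.inl rfl), if_pos (.inr rfl), add_mul]
  intro k _ hk
  simp only [mem_insert, mem_singleton] at hk
  rw [hf, if_neg hk, mul_zero]

theorem Nat.choose_add_ite_add_two_mul_choose (N k : ℕ) (hk : 1 ≤ k) :
    N.choose k + (if 2 ≤ k then N.choose (k - 2) else 0) + 2 * N.choose (k - 1) =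
      (N + 2).choose k := by
  rcases k with _ | _ | k
  · omega
  · simp
  · rw [if_pos (by omega), show k + 1 + 1 - 2 = k by omega, show k + 1 + 1 - 1 = k + 1 by omega,
      choose_succ_succ' (N + 1), choose_succ_succ', choose_succ_succ']
    ring

theorem add_add_two_mul_choose_pred_eq {n m : ℕ} (a : ℕ → ℕ)
    (ha : ∀ k, a k = Nat.choose (n - 2) k + if 2 ≤ k then Nat.choose (n - 2) (k - 2) else 0)
    (hn : 2 ≤ n) (hm : 2 ≤ m) :
    a (m - 1) + a m + 2 * (n - 1).choose (m - 1) = n.choose (m - 1) + n.choose m := by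
  have h₁ := Nat.choose_add_ite_add_two_mul_choose (n - 2) (m - 1) (by omega)
  have h₂ := Nat.choose_add_ite_add_two_mul_choose (n - 2) m (by omega)
  have h₃ := Nat.choose_eq_choose_pred_add (n := n - 1) (k := m - 1) (by omega) (by omega)
  rw [show n - 2 + 2 = n by omega] at h₁ h₂
  rw [show m - 1 - 1 = m - 2 by omega] at h₁ h₃
  rw [ha, ha, h₃, show n - 1 - 1 = n - 2 by omega]
  omega

theorem stmt_15 (m : ℕ) (hm : 2 ≤ m) (n : ℕ) (hn : n = 2 * m - 1)
    (a : ℕ → ℕ)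
    (ha : ∀ k, a k = Nat.choose (n - 2) k + if 2 ≤ k then Nat.choose (n - 2) (k - 2) else 0)
    (f : ℕ → ℝ)
    (hf : ∀ k, f k = if k = m - 1 ∨ k = m then 1 / (2 * (Nat.choose n m : ℝ)) else 0) :
    ∑ k ∈ range (n + 1), (Nat.choose n k : ℝ) * f k = 1 ∧
    ∑ k ∈ range (n + 1), (Nat.choose (n - 1) k : ℝ) * f k = 1 / 2 ∧
    ∑ k ∈ range (n + 1), (a k : ℝ) * f k = ((n : ℝ) - 1) / (2 * (n : ℝ)) := by
  have hsum (g : ℕ → ℝ) : ∑ k ∈ range (n + 1), g k * f k =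
      (g (m - 1) + g m) * (1 / (2 * (n.choose m : ℝ))) :=
    sum_mul_eq_of_support_pair (mem_range.mpr (by omega)) (mem_range.mpr (by omega)) (by omega)
      g f _ hf
  have hc : (n.choose m : ℝ) ≠ 0 := by exact_mod_cast (Nat.choose_pos (by omega)).ne'
  have hsymm : n.choose (m - 1) = n.choose m := Nat.choose_symm_of_eq_add (by omega)
  have hpascal : (n - 1).choose (m - 1) + (n - 1).choose m = n.choose m :=
    (Nat.choose_eq_choose_pred_add (by omega) (by omega)).symm
  have ha_sum : (a (m - 1) : ℝ) + a m + 2 * (n - 1).choose (m - 1) = 2 * n.choose m := by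
    have := add_add_two_mul_choose_pred_eq a ha (by omega : 2 ≤ n) hm
    rw [hsymm, ← two_mul] at this
    exact_mod_cast this
  have habsorb : (n : ℝ) * (n - 1).choose (m - 1) = n.choose m * m := by
    have := Nat.add_one_mul_choose_eq (n - 1) (m - 1)
    rw [Nat.sub_add_cancel (by omega : 1 ≤ n), Nat.sub_add_cancel (by omega : 1 ≤ m)] at this
    exact_mod_cast this
  have hnR : (n : ℝ) = 2 * m - 1 := by rw [hn, Nat.cast_sub (by omega)]; push_cast; ring
  refine ⟨?_, ?_, ?_⟩ <;> rw [hsum]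
  · rw [hsymm]
    field_simp
    ring
  · rw [← Nat.cast_add, hpascal]
    field_simp
  · have hn0 : (n : ℝ) ≠ 0 := by exact_mod_cast (show n ≠ 0 by omega)
    field_simp
    linear_combination (n : ℝ) * ha_sum - 2 * habsorb + (n.choose m : ℝ) * hnR
end

section
/- Let n ≥ 2 and p ∈ (0,1). Suppose there exist {0,1}-valued random variables X₁,…,Xₙ with P(Xᵢ=1) = 1/2 for all i and P(Xᵢ=Xⱼ) = p for all i ≠ j. Then p ≥ (m−1)/(2m−1) where m = ⌈n/2⌉. In particular, p ≥ (n−2)/(2(n−1)) if n is even and p ≥ (n−1)/(2n) if n is odd. -/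
/-!
Replace each `Xᵢ` by the sign `εᵢ = 2Xᵢ - 1 ∈ {±1}`, so that `εᵢεⱼ = 1` when `Xᵢ = Xⱼ` and `-1`
otherwise. Then `E[εᵢεⱼ] = 2p - 1` for `i ≠ j`, and expanding the square gives
`0 ≤ E[(∑ εᵢ)²] = n + n(n - 1)(2p - 1)`, i.e. `p ≥ (n - 2)/(2(n - 1))`. When `n` is odd, `∑ εᵢ` is an
odd integer, so `E[(∑ εᵢ)²] ≥ 1`, which improves the bound to `p ≥ (n - 1)/(2n)`. Both bounds are
`(m - 1)/(2m - 1)` with `m = ⌈n/2⌉`.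
-/

open MeasureTheory Finset

lemma sign_mul_sign_eq_ite {a b : ℝ} (ha : a = 0 ∨ a = 1) (hb : b = 0 ∨ b = 1) :
    (2 * a - 1) * (2 * b - 1) = if a = b then 1 else -1 := by
  rcases ha with rfl | rfl <;> rcases hb with rfl | rfl <;> norm_num

lemma one_le_sq_sum_sign_of_odd {ι : Type*} [Fintype ι] {x : ι → ℝ}
    (hx : ∀ i, x i = 0 ∨ x i = 1) (hodd : Odd (Fintype.card ι)) :
    1 ≤ (∑ i, (2 * x i - 1)) ^ 2 := by
  obtain ⟨k, hk⟩ : ∃ k : ℕ, (k : ℝ) = ∑ i, x i :=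
    ⟨#{i | x i = 1}, by
      rw [natCast_card_filter]
      exact sum_congr rfl fun i _ => by rcases hx i with h | h <;> simp [h]⟩
  have hsum : ∑ i, (2 * x i - 1) = ((2 * k - Fintype.card ι : ℤ) : ℝ) := by
    simp [sum_sub_distrib, ← mul_sum, ← hk]
  have hne : (2 * k - Fintype.card ι : ℤ) ≠ 0 := by
    obtain ⟨a, ha⟩ := hodd
    omega
  rw [hsum, one_le_sq_iff_one_le_abs, ← Int.cast_abs]
  exact_mod_cast Int.one_le_abs hne

lemma sum_sum_eq_of_diag_of_offDiag {ι : Type*} [Fintype ι] {f : ι → ι → ℝ}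
    {a b : ℝ} (hdiag : ∀ i, f i i = a) (hoff : ∀ i j, i ≠ j → f i j = b) :
    ∑ i, ∑ j, f i j =
      Fintype.card ι * a + Fintype.card ι * ((Fintype.card ι : ℝ) - 1) * b := by
  classical
  have hrow : ∀ i, ∑ j, f i j = a + ((Fintype.card ι : ℝ) - 1) * b := fun i => by
    rw [← add_sum_erase _ _ (mem_univ i), hdiag,
      sum_congr rfl fun j hj => hoff i j (ne_of_mem_erase hj).symm,
      sum_const, card_erase_of_mem (mem_univ i), card_univ,
      nsmul_eq_mul, Nat.cast_pred (Fintype.card_pos_iff.mpr ⟨i⟩)]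
  simp only [hrow, sum_const, card_univ, nsmul_eq_mul]
  ring

lemma succ_div_two_ratio_of_even {n : ℕ} (h : Even n) :
    (((n + 1) / 2 : ℕ) - 1 : ℝ) / (2 * ((n + 1) / 2 : ℕ) - 1 : ℝ) =
      ((n : ℝ) - 2) / (2 * ((n : ℝ) - 1)) := by
  obtain ⟨a, rfl⟩ := h
  rw [show (a + a + 1) / 2 = a by omega, ← mul_div_mul_left _ _ (two_ne_zero' ℝ)]
  push_cast
  ring_nf

lemma succ_div_two_ratio_of_odd {n : ℕ} (h : Odd n) :
    (((n + 1) / 2 : ℕ) - 1 : ℝ) / (2 * ((n + 1) / 2 : ℕ) - 1 : ℝ) =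
      ((n : ℝ) - 1) / (2 * (n : ℝ)) := by
  obtain ⟨a, rfl⟩ := h
  rw [show (2 * a + 1 + 1) / 2 = a + 1 by omega, ← mul_div_mul_left _ _ (two_ne_zero' ℝ)]
  push_cast
  ring_nf

lemma sign_mul_sign_eq_indicator {Ω ι : Type*} {X : ι → Ω → ℝ}
    (h01 : ∀ i ω, X i ω = 0 ∨ X i ω = 1) (i j : ι) :
    (fun ω => (2 * X i ω - 1) * (2 * X j ω - 1)) =
      fun ω => {ω | X i ω = X j ω}.indicator (fun _ => (2 : ℝ)) ω - 1 := by
  ext ω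
  rw [sign_mul_sign_eq_ite (h01 i ω) (h01 j ω)]
  by_cases h : X i ω = X j ω <;> norm_num [h]

section Signs

variable {Ω ι : Type*} [MeasurableSpace Ω] {μ : Measure Ω} {X : ι → Ω → ℝ}

lemma integrable_sign_mul_sign [IsFiniteMeasure μ] (hX : ∀ i, Measurable (X i))
    (h01 : ∀ i ω, X i ω = 0 ∨ X i ω = 1) (i j : ι) :
    Integrable (fun ω => (2 * X i ω - 1) * (2 * X j ω - 1)) μ := by
  rw [sign_mul_sign_eq_indicator h01]
  exact ((integrable_const _).indicator (measurableSet_eq_fun (hX i) (hX j))).sub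
    (integrable_const _)

lemma integral_sign_mul_sign [IsProbabilityMeasure μ] (hX : ∀ i, Measurable (X i))
    (h01 : ∀ i ω, X i ω = 0 ∨ X i ω = 1) (i j : ι) :
    ∫ ω, (2 * X i ω - 1) * (2 * X j ω - 1) ∂μ = 2 * μ.real {ω | X i ω = X j ω} - 1 := by
  have hmeas := measurableSet_eq_fun (hX i) (hX j)
  rw [sign_mul_sign_eq_indicator h01, integral_sub ((integrable_const _).indicator hmeas)
    (integrable_const _), integral_indicator_const _ hmeas]
  simp [mul_comm]

lemma integrable_sq_sum_sign [Fintype ι] [IsFiniteMeasure μ] (hX : ∀ i, Measurable (X i))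
    (h01 : ∀ i ω, X i ω = 0 ∨ X i ω = 1) :
    Integrable (fun ω => (∑ i, (2 * X i ω - 1)) ^ 2) μ := by
  simp only [sq, sum_mul_sum]
  exact integrable_finsetSum _ fun i _ =>
    integrable_finsetSum _ fun j _ => integrable_sign_mul_sign hX h01 i j

lemma integral_sq_sum_sign [Fintype ι] [IsProbabilityMeasure μ] (hX : ∀ i, Measurable (X i))
    (h01 : ∀ i ω, X i ω = 0 ∨ X i ω = 1) :
    ∫ ω, (∑ i, (2 * X i ω - 1)) ^ 2 ∂μ = ∑ i, ∑ j, (2 * μ.real {ω | X i ω = X j ω} - 1) := by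
  simp only [sq, sum_mul_sum]
  rw [integral_finsetSum _ fun i _ => integrable_finsetSum _ fun j _ =>
    integrable_sign_mul_sign hX h01 i j]
  refine sum_congr rfl fun i _ => ?_
  rw [integral_finsetSum _ fun j _ => integrable_sign_mul_sign hX h01 i j]
  exact sum_congr rfl fun j _ => integral_sign_mul_sign hX h01 i j

theorem integral_sq_sum_sign_of_agreement [Fintype ι] [IsProbabilityMeasure μ]
    (hX : ∀ i, Measurable (X i)) (h01 : ∀ i ω, X i ω = 0 ∨ X i ω = 1) {p : ℝ} (hp : 0 ≤ p)
    (heq : ∀ i j, i ≠ j → μ {ω | X i ω = X j ω} = ENNReal.ofReal p) :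
    ∫ ω, (∑ i, (2 * X i ω - 1)) ^ 2 ∂μ =
      Fintype.card ι + Fintype.card ι * ((Fintype.card ι : ℝ) - 1) * (2 * p - 1) := by
  rw [integral_sq_sum_sign hX h01, sum_sum_eq_of_diag_of_offDiag (a := 1) (b := 2 * p - 1)]
  · ring
  · intro i
    norm_num
  · intro i j hij
    rw [measureReal_def, heq i j hij, ENNReal.toReal_ofReal hp]

end Signs

theorem stmt_17_general {Ω : Type*} [MeasurableSpace Ω] (μ : Measure Ω) [IsProbabilityMeasure μ]
    (n : ℕ) (hn : 2 ≤ n) (p : ℝ) (hp : p ∈ Set.Ioo (0 : ℝ) 1)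
    (X : Fin n → Ω → ℝ) (hmeas : ∀ i, Measurable (X i))
    (h01 : ∀ i ω, X i ω = 0 ∨ X i ω = 1)
    (heq : ∀ i j, i ≠ j → μ {ω | X i ω = X j ω} = ENNReal.ofReal p) :
    p ≥ (((n + 1) / 2 : ℕ) - 1 : ℝ) / (2 * ((n + 1) / 2 : ℕ) - 1 : ℝ) ∧
    (Even n → p ≥ ((n : ℝ) - 2) / (2 * ((n : ℝ) - 1))) ∧
    (Odd n → p ≥ ((n : ℝ) - 1) / (2 * (n : ℝ))) := by
  have hn' : (2 : ℝ) ≤ n := by exact_mod_cast hn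
  have hval := integral_sq_sum_sign_of_agreement (μ := μ) hmeas h01 hp.1.le heq
  rw [Fintype.card_fin] at hval
  have hEven : p ≥ ((n : ℝ) - 2) / (2 * ((n : ℝ) - 1)) := by
    have h0 := hval ▸ integral_nonneg fun ω => sq_nonneg (∑ i, (2 * X i ω - 1))
    rw [ge_iff_le, div_le_iff₀ (by linarith)]
    nlinarith
  have hOdd : Odd n → p ≥ ((n : ℝ) - 1) / (2 * (n : ℝ)) := fun hodd => by
    have h1 : (1 : ℝ) ≤ n + n * ((n : ℝ) - 1) * (2 * p - 1) := by
      rw [← hval]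
      calc (1 : ℝ) = ∫ _, (1 : ℝ) ∂μ := by simp
        _ ≤ _ := integral_mono (integrable_const _) (integrable_sq_sum_sign hmeas h01)
          fun ω => one_le_sq_sum_sign_of_odd (h01 · ω) (by rwa [Fintype.card_fin])
    rw [ge_iff_le, div_le_iff₀ (by linarith)]
    nlinarith
  refine ⟨?_, fun _ => hEven, hOdd⟩
  rcases Nat.even_or_odd n with h | h
  · rwa [succ_div_two_ratio_of_even h]
  · rw [succ_div_two_ratio_of_odd h]
    exact hOdd h

theorem stmt_17 {Ω : Type*} [MeasurableSpace Ω] (μ : Measure Ω) [IsProbabilityMeasure μ]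
    (n : ℕ) (hn : 2 ≤ n) (p : ℝ) (hp : p ∈ Set.Ioo (0 : ℝ) 1)
    (X : Fin n → Ω → ℝ) (hmeas : ∀ i, Measurable (X i))
    (h01 : ∀ i ω, X i ω = 0 ∨ X i ω = 1)
    (hhalf : ∀ i, μ {ω | X i ω = 1} = 1 / 2)
    (heq : ∀ i j, i ≠ j → μ {ω | X i ω = X j ω} = ENNReal.ofReal p) :
    p ≥ (((n + 1) / 2 : ℕ) - 1 : ℝ) / (2 * ((n + 1) / 2 : ℕ) - 1 : ℝ) ∧
    (Even n → p ≥ ((n : ℝ) - 2) / (2 * ((n : ℝ) - 1))) ∧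
    (Odd n → p ≥ ((n : ℝ) - 1) / (2 * (n : ℝ))) :=
  stmt_17_general μ n hn p hp X hmeas h01 heq
end

section
/- Let n ≥ 2, m = ⌈n/2⌉, and p ∈ [(m−1)/(2m−1), 1]. Then there exist {0,1}-valued random variables X₁,…,Xₙ with P(Xᵢ=1) = 1/2 for all i and P(Xᵢ=Xⱼ) = p for all i ≠ j. -/
/-!
Let `S` be a uniformly random `m`-subset of `Fin n`, replaced by its complement with probability
`1/2`. Then every `i` lies in `S` with probability `1/2`, and `i ≠ j` are on the same side of `S`
with probability `1 - 2m(n - m)/(n(n - 1))`, which equals `(m - 1)/(2m - 1)` for `m = ⌈n/2⌉`.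
Doing the same with `S = ∅` (so `S` is `∅` or everything) keeps the marginals and makes all
coordinates agree. Mixing the two laws in proportions `1 - t : t` gives every agreement
probability in `[(m - 1)/(2m - 1), 1]`.
-/

open MeasureTheory ProbabilityTheory Finset
open scoped ENNReal

theorem Nat.mul_sub_one_mul_choose_sub_two (n : ℕ) {k : ℕ} (hk : 1 ≤ k) :
    n * (n - 1) * (n - 2).choose (k - 1) = k * (n - k) * n.choose k := by
  obtain ⟨k, rfl⟩ := Nat.exists_eq_add_of_le' hk
  obtain _ | _ | n := n
  · simp
  · rcases k with _ | k <;> simp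
  have h₁ : (n + 2) * (n + 1).choose k = (n + 2).choose (k + 1) * (k + 1) :=
    Nat.add_one_mul_choose_eq (n + 1) k
  have h₂ := Nat.choose_mul_succ_eq n k
  rw [show n + 2 - 2 = n by omega, show n + 2 - (k + 1) = n + 1 - k by omega]
  calc (n + 2) * (n + 1) * n.choose k = (n + 2) * (n + 1).choose k * (n + 1 - k) := by
        rw [mul_assoc, mul_comm (n + 1), h₂, mul_assoc]
    _ = (k + 1) * (n + 1 - k) * (n + 2).choose (k + 1) := by rw [h₁]; ring

lemma one_sub_two_mul_mul_sub_div_eq {m n : ℝ} (hn : n = 2 * m ∨ n + 1 = 2 * m) (hn2 : 2 ≤ n) :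
    1 - 2 * m * (n - m) / (n * (n - 1)) = (m - 1) / (2 * m - 1) := by
  have hm : 1 ≤ m := by rcases hn with hn | hn <;> linarith
  have h₁ : 2 * m - 1 ≠ 0 := by linarith
  rcases hn with rfl | hn
  · have h₂ : m ≠ 0 := by linarith
    field_simp
    ring
  · obtain rfl : n = 2 * m - 1 := by linarith
    have h₂ : 2 * m - 1 - 1 ≠ 0 := by linarith
    field_simp
    ring

namespace MeasureTheory.Measure

variable {Ω : Type*} [MeasurableSpace Ω]

noncomputable def mixture (t : ℝ) (μ ν : Measure Ω) : Measure Ω :=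
  ENNReal.ofReal (1 - t) • μ + ENNReal.ofReal t • ν

lemma mixture_apply_of_eq_ofReal {t a b : ℝ} {μ ν : Measure Ω} {s : Set Ω} (ht₀ : 0 ≤ t)
    (ht₁ : t ≤ 1) (ha : 0 ≤ a) (hb : 0 ≤ b) (hμ : μ s = .ofReal a) (hν : ν s = .ofReal b) :
    mixture t μ ν s = .ofReal ((1 - t) * a + t * b) := by
  rw [mixture, add_apply, smul_apply, smul_apply, hμ, hν, smul_eq_mul, smul_eq_mul,
    ← ENNReal.ofReal_mul (by linarith), ← ENNReal.ofReal_mul ht₀,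
    ← ENNReal.ofReal_add (by nlinarith) (by positivity)]

lemma isProbabilityMeasure_mixture {t : ℝ} (ht₀ : 0 ≤ t) (ht₁ : t ≤ 1) (μ ν : Measure Ω)
    [IsProbabilityMeasure μ] [IsProbabilityMeasure ν] : IsProbabilityMeasure (mixture t μ ν) :=
  ⟨by rw [mixture_apply_of_eq_ofReal ht₀ ht₁ zero_le_one zero_le_one (by simp) (by simp)]; simp⟩

end MeasureTheory.Measure

namespace Finset

variable {α : Type*} [DecidableEq α] {s : Finset α} {i j : α} {k : ℕ}

lemma card_filter_powersetCard_mem_and_notMem (hi : i ∈ s) (hj : j ∈ s) (hij : i ≠ j)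
    (hk : 1 ≤ k) : #{S ∈ powersetCard k s | i ∈ S ∧ j ∉ S} = (#s - 2).choose (k - 1) := by
  have hset : {S ∈ powersetCard k s | i ∈ S ∧ j ∉ S}
      = {S ∈ powersetCard k (s.erase j) | {i} ⊆ S} := by
    ext S
    simp only [mem_filter, mem_powersetCard, subset_erase, singleton_subset_iff]
    tauto
  rw [hset, card_filter_powersetCard_subset _ _ _ (by simpa [hij] using hi) (by simpa using hk),
    card_erase_of_mem hj, card_singleton, Nat.sub_sub]

lemma card_filter_powersetCard_mem_iff_mem_add (hi : i ∈ s) (hj : j ∈ s) (hij : i ≠ j)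
    (hk : 1 ≤ k) :
    #{S ∈ powersetCard k s | i ∈ S ↔ j ∈ S} + 2 * (#s - 2).choose (k - 1) = (#s).choose k := by
  have hsplit : {S ∈ powersetCard k s | ¬(i ∈ S ↔ j ∈ S)}
      = {S ∈ powersetCard k s | i ∈ S ∧ j ∉ S} ∪ {S ∈ powersetCard k s | j ∈ S ∧ i ∉ S} := by
    rw [← filter_or]
    congr! 1
    tauto
  have hdisj : Disjoint {S ∈ powersetCard k s | i ∈ S ∧ j ∉ S}
      {S ∈ powersetCard k s | j ∈ S ∧ i ∉ S} :=
    disjoint_filter.2 fun _ _ h h' => h.2 h'.1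
  have hcount := card_filter_add_card_filter_not (s := powersetCard k s)
    (fun S => i ∈ S ↔ j ∈ S)
  rw [hsplit, card_union_of_disjoint hdisj,
    card_filter_powersetCard_mem_and_notMem hi hj hij hk,
    card_filter_powersetCard_mem_and_notMem hj hi hij.symm hk, card_powersetCard] at hcount
  omega

lemma uniformOn_powersetCard_mem_iff_mem [Countable α] (hi : i ∈ s) (hj : j ∈ s) (hij : i ≠ j)
    (hk : 1 ≤ k) (hks : k ≤ #s) :
    uniformOn (powersetCard k s : Set (Finset α)) {S | i ∈ S ↔ j ∈ S}
      = .ofReal (1 - 2 * k * (#s - k) / (#s * (#s - 1))) := by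
  set n := #s
  have hn : (2 : ℝ) ≤ n := by
    exact_mod_cast card_pair hij ▸ card_le_card (insert_subset hi (singleton_subset_iff.2 hj))
  have hN : (0 : ℝ) < n.choose k := by exact_mod_cast Nat.choose_pos hks
  have hcount : (#{S ∈ powersetCard k s | i ∈ S ↔ j ∈ S} : ℝ)
      = n.choose k - 2 * (n - 2).choose (k - 1) := by
    rw [eq_sub_iff_add_eq]
    exact_mod_cast card_filter_powersetCard_mem_iff_mem_add hi hj hij hk
  have hratio : (n : ℝ) * (n - 1) * (n - 2).choose (k - 1) = k * (n - k) * n.choose k := by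
    have := congrArg (Nat.cast : ℕ → ℝ) (Nat.mul_sub_one_mul_choose_sub_two n hk)
    push_cast [Nat.cast_sub (by omega : 1 ≤ n), Nat.cast_sub hks] at this
    exact this
  have hreal : (#{S ∈ powersetCard k s | i ∈ S ↔ j ∈ S} : ℝ) / n.choose k
      = 1 - 2 * k * (n - k) / (n * (n - 1)) := by
    have hn₀ : (n : ℝ) ≠ 0 := by positivity
    have hn₁ : (n : ℝ) - 1 ≠ 0 := by linarith
    rw [hcount]
    field_simp
    linear_combination -2 * hratio
  have hset : (powersetCard k s : Set (Finset α)) ∩ {S | i ∈ S ↔ j ∈ S}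
      = ↑{S ∈ powersetCard k s | i ∈ S ↔ j ∈ S} := by
    ext; simp
  rw [← uniformOn_inter_self (finite_toSet _), hset, uniformOn_apply_finset, inter_filter,
    inter_self, card_powersetCard, ← hreal, ENNReal.ofReal_div_of_pos hN, ENNReal.ofReal_natCast,
    ENNReal.ofReal_natCast]

variable [Fintype α]

noncomputable def symmetrizeCompl (ν : Measure (Finset α)) : Measure (Finset α) :=
  (2⁻¹ : ℝ≥0∞) • (ν + ν.map compl)

lemma symmetrizeCompl_apply (ν : Measure (Finset α)) (A : Set (Finset α)) :
    symmetrizeCompl ν A = 2⁻¹ * (ν A + ν (compl ⁻¹' A)) := by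
  rw [symmetrizeCompl, Measure.smul_apply, Measure.add_apply,
    Measure.map_apply .of_discrete .of_discrete, smul_eq_mul]

instance (ν : Measure (Finset α)) [IsProbabilityMeasure ν] :
    IsProbabilityMeasure (symmetrizeCompl ν) :=
  ⟨by simp [symmetrizeCompl_apply, one_add_one_eq_two, ENNReal.inv_mul_cancel]⟩

lemma symmetrizeCompl_mem (ν : Measure (Finset α)) [IsProbabilityMeasure ν] (i : α) :
    symmetrizeCompl ν {S | i ∈ S} = 2⁻¹ := by
  have hpre : compl ⁻¹' {S : Finset α | i ∈ S} = {S | i ∈ S}ᶜ := by ext; simp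
  rw [symmetrizeCompl_apply, hpre, measure_add_measure_compl .of_discrete, measure_univ, mul_one]

lemma symmetrizeCompl_mem_iff_mem (ν : Measure (Finset α)) (i j : α) :
    symmetrizeCompl ν {S | i ∈ S ↔ j ∈ S} = ν {S | i ∈ S ↔ j ∈ S} := by
  have hpre : compl ⁻¹' {S : Finset α | i ∈ S ↔ j ∈ S} = {S | i ∈ S ↔ j ∈ S} := by
    ext; simp [not_iff_not]
  rw [symmetrizeCompl_apply, hpre, ← two_mul, ← mul_assoc,
    ENNReal.inv_mul_cancel two_ne_zero ENNReal.ofNat_ne_top, one_mul]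

lemma mixture_symmetrizeCompl_mem {t : ℝ} (ht₀ : 0 ≤ t) (ht₁ : t ≤ 1)
    (ν ν' : Measure (Finset α)) [IsProbabilityMeasure ν] [IsProbabilityMeasure ν'] (i : α) :
    Measure.mixture t (symmetrizeCompl ν) (symmetrizeCompl ν') {S | i ∈ S} = 2⁻¹ := by
  have hhalf : ENNReal.ofReal 2⁻¹ = 2⁻¹ := by
    rw [ENNReal.ofReal_inv_of_pos two_pos, ENNReal.ofReal_ofNat]
  rw [Measure.mixture_apply_of_eq_ofReal ht₀ ht₁ (a := 2⁻¹) (b := 2⁻¹) (by norm_num)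
    (by norm_num) (by rw [symmetrizeCompl_mem, hhalf]) (by rw [symmetrizeCompl_mem, hhalf]),
    ← add_mul, sub_add_cancel, one_mul, hhalf]

lemma mixture_symmetrizeCompl_dirac_empty_mem_iff_mem {t a : ℝ} (ht₀ : 0 ≤ t) (ht₁ : t ≤ 1)
    (ha : 0 ≤ a) {ν : Measure (Finset α)} {i j : α}
    (hν : ν {S | i ∈ S ↔ j ∈ S} = .ofReal a) :
    Measure.mixture t (symmetrizeCompl ν) (symmetrizeCompl (Measure.dirac ∅))
      {S | i ∈ S ↔ j ∈ S} = .ofReal ((1 - t) * a + t * 1) :=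
  Measure.mixture_apply_of_eq_ofReal ht₀ ht₁ ha zero_le_one
    (by rw [symmetrizeCompl_mem_iff_mem, hν]) (by simp [symmetrizeCompl_mem_iff_mem])

end Finset

theorem stmt_18 (n : ℕ) (hn : 2 ≤ n) (p : ℝ)
    (hp : p ∈ Set.Icc ((((n + 1) / 2 : ℕ) - 1 : ℝ) / (2 * ((n + 1) / 2 : ℕ) - 1 : ℝ)) 1) :
    ∃ (Ω : Type) (_ : MeasurableSpace Ω) (μ : Measure Ω) (_ : IsProbabilityMeasure μ)
      (X : Fin n → Ω → ℝ),
      (∀ i, Measurable (X i)) ∧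
      (∀ i ω, X i ω = 0 ∨ X i ω = 1) ∧
      (∀ i, μ {ω | X i ω = 1} = 1 / 2) ∧
      (∀ i j, i ≠ j → μ {ω | X i ω = X j ω} = ENNReal.ofReal p) := by
  set m := (n + 1) / 2
  have hm : 1 ≤ m ∧ m ≤ n := by omega
  set p₀ : ℝ := (m - 1) / (2 * m - 1)
  have hp₀ : 0 ≤ p₀ := by
    have : (1 : ℝ) ≤ m := by exact_mod_cast hm.1
    exact div_nonneg (by linarith) (by linarith)
  obtain ⟨t, ⟨ht₀, ht₁⟩, rfl⟩ : ∃ t ∈ Set.Icc (0 : ℝ) 1, (1 - t) * p₀ + t * 1 = p := by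
    rw [← segment_eq_Icc (hp.1.trans hp.2), segment_eq_image] at hp
    simpa using hp
  let ν := uniformOn (powersetCard m (univ : Finset (Fin n)) : Set (Finset (Fin n)))
  have : IsProbabilityMeasure ν :=
    isProbabilityMeasure_uniformOn (finite_toSet _) (by simpa using hm.2)
  have hν (i j : Fin n) (hij : i ≠ j) : ν {S | i ∈ S ↔ j ∈ S} = .ofReal p₀ := by
    rw [uniformOn_powersetCard_mem_iff_mem (mem_univ i) (mem_univ j) hij hm.1 (by simpa using hm.2),
      card_univ, Fintype.card_fin, one_sub_two_mul_mul_sub_div_eq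
        (by exact_mod_cast (by omega : n = 2 * m ∨ n + 1 = 2 * m)) (by exact_mod_cast hn)]
  refine ⟨Finset (Fin n), inferInstance, Measure.mixture t (symmetrizeCompl ν)
    (symmetrizeCompl (Measure.dirac ∅)), Measure.isProbabilityMeasure_mixture ht₀ ht₁ _ _,
    fun i S => if i ∈ S then 1 else 0, fun _ => .of_discrete,
    fun _ _ => (ite_eq_or_eq _ _ _).symm, fun i => ?_, fun i j hij => ?_⟩
  · simpa using mixture_symmetrizeCompl_mem ht₀ ht₁ ν _ i
  · have hset : {S : Finset (Fin n) | (if i ∈ S then (1 : ℝ) else 0) = if j ∈ S then 1 else 0}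
        = {S | i ∈ S ↔ j ∈ S} := by
      ext S; by_cases i ∈ S <;> by_cases j ∈ S <;> simp [*]
    rw [hset, mixture_symmetrizeCompl_dirac_empty_mem_iff_mem ht₀ ht₁ hp₀ (hν i j hij)]
end

section
/- For n ≥ 2 and symmetric Bernoulli random variables X₁,…,Xₙ with constant pairwise correlation ρ, the set of achievable values of ρ is exactly [−1/(2m−1), 1] where m = ⌈n/2⌉; this equals [−1/(n−1), 1] for even n and [−1/n, 1] for odd n. -/
/-!
Write `Y i = 2 * X i - 1 ∈ {-1, 1}`; then `ρ = 𝔼[Y i * Y j]` and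
`𝔼[(∑ i, Y i)^2] = n + n (n - 1) ρ`. As `∑ i, Y i` is an integer with the parity of `n`,
`(∑ i, Y i)^2 ≥ n % 2`, whence `ρ ≥ (n % 2 - n) / (n (n - 1)) = -1/(2m - 1)`; `ρ ≤ 1` is trivial.

Conversely, let `f` be a `±1` vector with `m` entries equal to `1`, `π` a uniform random
permutation and `ε` an independent fair sign, and put `Y i = ε * f (π i)`. Then
`∑ i, Y i = ±(2m - n)` is constant, so the bound is attained, and by symmetry all pairwise
correlations agree: this realises `ρ = -1/(2m - 1)`, and `f = 1` realises `ρ = 1`. Mixtures of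
finite models realise everything in between.
-/

open MeasureTheory Finset

theorem sum_sum_eq_of_pairwise {ι : Type*} [Fintype ι] [DecidableEq ι] (a : ι → ι → ℝ) {c : ℝ}
    (h : ∀ i j, i ≠ j → a i j = c) :
    ∑ i, ∑ j, a i j = ∑ i, a i i + Fintype.card ι * (Fintype.card ι - 1) * c := by
  have key : ∀ i j, a i j = c + if i = j then a i i - c else 0 := by
    intro i j
    by_cases hij : i = j
    · subst hij; simp
    · simp [hij, h i j hij]
  calc ∑ i, ∑ j, a i j = ∑ i, ∑ j, (c + if i = j then a i i - c else 0) := by simp only [← key]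
    _ = _ := by simp [sum_add_distrib, sum_sub_distrib]; ring

theorem sum_ite_mem_one_neg_one {ι : Type*} [Fintype ι] [DecidableEq ι] (S : Finset ι) :
    ∑ i, (if i ∈ S then 1 else -1 : ℝ) = 2 * #S - Fintype.card ι := by
  rw [sum_ite, sum_const, sum_const, filter_mem_eq_inter, univ_inter, filter_not,
    filter_mem_eq_inter, univ_inter, card_sdiff_of_subset (subset_univ S), card_univ]
  simp [Nat.cast_sub (card_le_univ S)]; ring

theorem card_mod_two_le_sq_sum {ι : Type*} [Fintype ι] (s : ι → ℝ)
    (hs : ∀ i, s i = -1 ∨ s i = 1) :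
    ((Fintype.card ι % 2 : ℕ) : ℝ) ≤ (∑ i, s i) ^ 2 := by
  classical
  set S := univ.filter (fun i => s i = 1)
  have hS : ∑ i, s i = ∑ i, (if i ∈ S then 1 else -1 : ℝ) := by
    refine sum_congr rfl fun i _ => ?_
    rcases hs i with h | h <;> simp [S, h]
  have hZ : ((Fintype.card ι % 2 : ℕ) : ℤ) ≤ (2 * (#S : ℤ) - Fintype.card ι) ^ 2 := by
    rcases Nat.even_or_odd (Fintype.card ι) with h | h
    · rw [Nat.even_iff.mp h]; positivity
    · have hne : 2 * (#S : ℤ) - Fintype.card ι ≠ 0 := by obtain ⟨k, hk⟩ := h; omega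
      rw [Nat.odd_iff.mp h, Nat.cast_one, ← sq_abs]
      nlinarith [Int.one_le_abs hne]
  have hR := (Int.cast_le (R := ℝ)).mpr hZ
  push_cast at hR
  rwa [hS, sum_ite_mem_one_neg_one]

theorem card_mul_sum_perm_apply_mul_apply {α : Type*} [Fintype α] [DecidableEq α] (f : α → ℝ)
    {i j : α} (hij : i ≠ j) :
    Fintype.card α * (Fintype.card α - 1) * ∑ π : Equiv.Perm α, f (π i) * f (π j)
      = (Fintype.card α).factorial * ((∑ a, f a) ^ 2 - ∑ a, f a ^ 2) := by
  -- `Equiv.Perm α` acts 2-transitively, so the sum does not depend on the pair `(i, j)`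
  have hsymm : ∀ k l, k ≠ l →
      ∑ π : Equiv.Perm α, f (π k) * f (π l) = ∑ π : Equiv.Perm α, f (π i) * f (π j) := by
    intro k l hkl
    obtain ⟨σ, hσk, hσl⟩ := MulAction.is_two_pretransitive_iff.mp
      (Equiv.Perm.isMultiplyPretransitive α 2) hkl hij
    rw [Equiv.Perm.smul_def] at hσk hσl
    rw [← Equiv.sum_comp (Equiv.mulRight σ)]
    simp [hσk, hσl]
  have hpair := sum_sum_eq_of_pairwise _ hsymm
  simp_rw [← sum_comm (γ := Equiv.Perm α), ← mul_sum, ← sum_mul,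
    Equiv.sum_comp (g := fun a => f a * f a), Equiv.sum_comp, sum_const, card_univ,
    Fintype.card_perm, nsmul_eq_mul] at hpair
  simp only [sq]
  linarith

/-- The paper's `-1/(2m - 1)` with `m = ⌈n/2⌉ = (n + 1) / 2`. -/
noncomputable def minCorrelation (n : ℕ) : ℝ := -(1 / (2 * (((n + 1) / 2 : ℕ) : ℝ) - 1))

theorem minCorrelation_of_even {n : ℕ} (h : Even n) : minCorrelation n = -(1 / ((n : ℝ) - 1)) := by
  obtain ⟨k, rfl⟩ := h
  rw [minCorrelation, show (k + k + 1) / 2 = k by omega]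
  push_cast; ring

theorem minCorrelation_of_odd {n : ℕ} (h : Odd n) : minCorrelation n = -(1 / (n : ℝ)) := by
  obtain ⟨k, rfl⟩ := h
  rw [minCorrelation, show (2 * k + 1 + 1) / 2 = k + 1 by omega]
  push_cast; ring

theorem mul_minCorrelation {n : ℕ} (hn : 2 ≤ n) :
    n * (n - 1) * minCorrelation n = (n % 2 : ℕ) - n := by
  have hn' : (2 : ℝ) ≤ n := by exact_mod_cast hn
  rcases Nat.even_or_odd n with h | h
  · rw [minCorrelation_of_even h, Nat.even_iff.mp h]
    field_simp [show (n : ℝ) - 1 ≠ 0 by linarith]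
    simp
  · rw [minCorrelation_of_odd h, Nat.odd_iff.mp h]
    field_simp [show (n : ℝ) ≠ 0 by linarith]
    simp

theorem sq_two_mul_half_sub (n : ℕ) : (2 * (((n + 1) / 2 : ℕ) : ℝ) - n) ^ 2 = (n % 2 : ℕ) := by
  rcases Nat.even_or_odd n with ⟨k, rfl⟩ | ⟨k, rfl⟩
  · rw [show (k + k + 1) / 2 = k by omega, show (k + k) % 2 = 0 by omega]
    push_cast; ring
  · rw [show (2 * k + 1 + 1) / 2 = k + 1 by omega, show (2 * k + 1) % 2 = 1 by omega]
    push_cast; ring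

section Sign

variable {Ω ι : Type*} [MeasurableSpace Ω] {μ : Measure Ω} {Y : ι → Ω → ℝ}

theorem integrable_mul_of_sign [IsFiniteMeasure μ] (hY : ∀ i, Measurable (Y i))
    (hsign : ∀ i ω, Y i ω = -1 ∨ Y i ω = 1) (i j : ι) :
    Integrable (fun ω => Y i ω * Y j ω) μ := by
  refine .of_bound ((hY i).mul (hY j)).aestronglyMeasurable 1 (ae_of_all _ fun ω => ?_)
  rcases hsign i ω with h | h <;> rcases hsign j ω with h' | h' <;> simp [h, h']

theorem integrable_sq_sum_of_sign [IsFiniteMeasure μ] [Fintype ι] (hY : ∀ i, Measurable (Y i))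
    (hsign : ∀ i ω, Y i ω = -1 ∨ Y i ω = 1) : Integrable (fun ω => (∑ i, Y i ω) ^ 2) μ := by
  simp_rw [sq, sum_mul_sum]
  exact integrable_finsetSum _ fun i _ =>
    integrable_finsetSum _ fun j _ => integrable_mul_of_sign hY hsign i j

theorem integral_sq_sum_of_sign [IsProbabilityMeasure μ] [Fintype ι]
    (hY : ∀ i, Measurable (Y i)) (hsign : ∀ i ω, Y i ω = -1 ∨ Y i ω = 1) {ρ : ℝ}
    (hρ : ∀ i j, i ≠ j → ∫ ω, Y i ω * Y j ω ∂μ = ρ) :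
    ∫ ω, (∑ i, Y i ω) ^ 2 ∂μ = Fintype.card ι + Fintype.card ι * (Fintype.card ι - 1) * ρ := by
  classical
  have hint := integrable_mul_of_sign (μ := μ) hY hsign
  have hdiag : ∀ i, ∫ ω, Y i ω * Y i ω ∂μ = 1 := fun i => by
    have : ∀ ω, Y i ω * Y i ω = 1 := fun ω => by rcases hsign i ω with h | h <;> simp [h]
    simp [this]
  simp_rw [sq, sum_mul_sum]
  rw [integral_finsetSum _ fun i _ => integrable_finsetSum _ fun j _ => hint i j]
  simp_rw [integral_finsetSum _ fun j _ => hint _ j]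
  rw [sum_sum_eq_of_pairwise _ hρ]
  simp [hdiag]

theorem mem_Icc_minCorrelation_of_sign [IsProbabilityMeasure μ] [Fintype ι]
    (hι : 2 ≤ Fintype.card ι) (hY : ∀ i, Measurable (Y i))
    (hsign : ∀ i ω, Y i ω = -1 ∨ Y i ω = 1) {ρ : ℝ}
    (hρ : ∀ i j, i ≠ j → ∫ ω, Y i ω * Y j ω ∂μ = ρ) :
    ρ ∈ Set.Icc (minCorrelation (Fintype.card ι)) 1 := by
  have hint := integrable_mul_of_sign (μ := μ) hY hsign
  constructor
  · have hle : ((Fintype.card ι % 2 : ℕ) : ℝ) ≤ ∫ ω, (∑ i, Y i ω) ^ 2 ∂μ := by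
      calc ((Fintype.card ι % 2 : ℕ) : ℝ) = ∫ _, ((Fintype.card ι % 2 : ℕ) : ℝ) ∂μ := by simp
        _ ≤ _ := integral_mono (integrable_const _) (integrable_sq_sum_of_sign hY hsign)
            fun ω => card_mod_two_le_sq_sum _ fun i => hsign i ω
    rw [integral_sq_sum_of_sign hY hsign hρ] at hle
    have hpos : (0 : ℝ) < Fintype.card ι * (Fintype.card ι - 1) := by
      have : (2 : ℝ) ≤ Fintype.card ι := by exact_mod_cast hι
      nlinarith
    refine le_of_mul_le_mul_left ?_ hpos
    rw [mul_minCorrelation hι]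
    linarith
  · obtain ⟨i, j, hij⟩ := Fintype.exists_pair_of_one_lt_card hι
    rw [← hρ i j hij]
    calc ∫ ω, Y i ω * Y j ω ∂μ ≤ ∫ _, (1 : ℝ) ∂μ :=
          integral_mono (hint i j) (integrable_const 1) fun ω => by
            rcases hsign i ω with h | h <;> rcases hsign j ω with h' | h' <;> simp [h, h']
      _ = 1 := by simp

end Sign

section Bernoulli

variable {Ω : Type*} [MeasurableSpace Ω] {μ : Measure Ω}

theorem integral_eq_measureReal_of_zero_or_one {X : Ω → ℝ} (hX : Measurable X)
    (h01 : ∀ ω, X ω = 0 ∨ X ω = 1) : ∫ ω, X ω ∂μ = μ.real {ω | X ω = 1} := by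
  have hind : X = {ω | X ω = 1}.indicator 1 := by
    funext ω
    rcases h01 ω with h | h <;> simp [h]
  conv_lhs => rw [hind]
  exact integral_indicator_one (hX (measurableSet_singleton 1))

theorem cov_div_quarter_eq_integral [IsProbabilityMeasure μ] {X Y : Ω → ℝ}
    (hX : Integrable X μ) (hY : Integrable Y μ) (hXY : Integrable (fun ω => X ω * Y ω) μ)
    (hEX : ∫ ω, X ω ∂μ = 1 / 2) (hEY : ∫ ω, Y ω ∂μ = 1 / 2) :
    (∫ ω, X ω * Y ω ∂μ - (∫ ω, X ω ∂μ) * (∫ ω, Y ω ∂μ)) / (1 / 4)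
      = ∫ ω, (2 * X ω - 1) * (2 * Y ω - 1) ∂μ := by
  have hexp : (fun ω => (2 * X ω - 1) * (2 * Y ω - 1))
      = fun ω => 4 * (X ω * Y ω) - 2 * X ω - 2 * Y ω + 1 := by
    funext ω; ring
  rw [hexp, integral_add _ (integrable_const 1), integral_sub, integral_sub,
    integral_const_mul, integral_const_mul, integral_const_mul, hEX, hEY]
  · simp; ring
  all_goals fun_prop

end Bernoulli

theorem mem_Icc_minCorrelation_of_bernoulli {Ω ι : Type*} [MeasurableSpace Ω] {μ : Measure Ω}
    [IsProbabilityMeasure μ] [Fintype ι] (hι : 2 ≤ Fintype.card ι) {X : ι → Ω → ℝ}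
    (hX : ∀ i, Measurable (X i)) (h01 : ∀ i ω, X i ω = 0 ∨ X i ω = 1)
    (hhalf : ∀ i, μ {ω | X i ω = 1} = 1 / 2) {ρ : ℝ}
    (hcorr : ∀ i j, i ≠ j →
      (∫ ω, X i ω * X j ω ∂μ - (∫ ω, X i ω ∂μ) * (∫ ω, X j ω ∂μ)) / (1 / 4) = ρ) :
    ρ ∈ Set.Icc (minCorrelation (Fintype.card ι)) 1 := by
  have hE : ∀ i, ∫ ω, X i ω ∂μ = 1 / 2 := fun i => by
    rw [integral_eq_measureReal_of_zero_or_one (hX i) (h01 i), measureReal_def, hhalf i]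
    simp
  have hXint : ∀ i, Integrable (X i) μ := fun i =>
    .of_bound (hX i).aestronglyMeasurable 1 (ae_of_all _ fun ω => by
      rcases h01 i ω with h | h <;> simp [h])
  have hint : ∀ i j, Integrable (fun ω => X i ω * X j ω) μ := fun i j =>
    .of_bound ((hX i).mul (hX j)).aestronglyMeasurable 1 (ae_of_all _ fun ω => by
      rcases h01 i ω with h | h <;> rcases h01 j ω with h' | h' <;> simp [h, h'])
  refine mem_Icc_minCorrelation_of_sign (μ := μ) hι (Y := fun i ω => 2 * X i ω - 1)
    (fun i => by fun_prop) (fun i ω => by rcases h01 i ω with h | h <;> norm_num [h]) ?_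
  intro i j hij
  rw [← hcorr i j hij, cov_div_quarter_eq_integral (hXint i) (hXint j) (hint i j) (hE i) (hE j)]

/-- Finitely supported models: the weights `w` are the law on `Ω`. -/
def IsEquicorrelation (ι : Type*) (ρ : ℝ) : Prop :=
  ∃ (Ω : Type) (_ : Fintype Ω) (w : Ω → ℝ) (Y : ι → Ω → ℝ),
    (∀ ω, 0 ≤ w ω) ∧ ∑ ω, w ω = 1 ∧ (∀ i ω, Y i ω = -1 ∨ Y i ω = 1) ∧
    (∀ i, ∑ ω, w ω * Y i ω = 0) ∧ ∀ i j, i ≠ j → ∑ ω, w ω * (Y i ω * Y j ω) = ρ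

theorem convex_setOf_isEquicorrelation (ι : Type*) : Convex ℝ {ρ | IsEquicorrelation ι ρ} := by
  rintro ρ₁ ⟨Ω₁, _, w₁, Y₁, hw₁, hsum₁, hY₁, hmean₁, hcorr₁⟩ ρ₂
    ⟨Ω₂, _, w₂, Y₂, hw₂, hsum₂, hY₂, hmean₂, hcorr₂⟩ a b ha hb hab
  refine ⟨Ω₁ ⊕ Ω₂, inferInstance, Sum.elim (a • w₁) (b • w₂), fun i => Sum.elim (Y₁ i) (Y₂ i),
    ?_, ?_, ?_, ?_, ?_⟩
  · rintro (ω | ω)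
    · exact mul_nonneg ha (hw₁ ω)
    · exact mul_nonneg hb (hw₂ ω)
  · simp [Fintype.sum_sum_type, ← mul_sum, hsum₁, hsum₂, hab]
  · rintro i (ω | ω)
    · exact hY₁ i ω
    · exact hY₂ i ω
  · intro i
    simp [Fintype.sum_sum_type, mul_assoc, ← mul_sum, hmean₁, hmean₂]
  · intro i j hij
    simp [Fintype.sum_sum_type, mul_assoc, ← mul_sum, hcorr₁ i j hij, hcorr₂ i j hij]

theorem isEquicorrelation_perm {ι : Type} [Fintype ι] [DecidableEq ι] (hι : 2 ≤ Fintype.card ι)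
    (f : ι → ℝ) (hf : ∀ i, f i = -1 ∨ f i = 1) :
    IsEquicorrelation ι
      (((∑ i, f i) ^ 2 - Fintype.card ι) / (Fintype.card ι * (Fintype.card ι - 1))) := by
  refine ⟨Equiv.Perm ι × Bool, inferInstance, fun _ => 1 / (2 * (Fintype.card ι).factorial),
    fun i x => (if x.2 then 1 else -1) * f (x.1 i), fun _ => by positivity, ?_, ?_, ?_, ?_⟩
  · simp [Fintype.card_perm]
    field_simp
  · rintro i ⟨π, b⟩
    rcases hf (π i) with h | h <;> cases b <;> simp [h]
  · intro i
    simp [Fintype.sum_prod_type]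
  · intro i j hij
    have h := card_mul_sum_perm_apply_mul_apply f hij
    have hsq : ∀ a, f a ^ 2 = 1 := fun a => by rcases hf a with h | h <;> simp [h]
    simp only [hsq, sum_const, card_univ, nsmul_one] at h
    have hN : (Fintype.card ι : ℝ) * (Fintype.card ι - 1) ≠ 0 := by
      have : (2 : ℝ) ≤ Fintype.card ι := by exact_mod_cast hι
      nlinarith
    have hsum : ∑ x : Equiv.Perm ι × Bool, 1 / (2 * ((Fintype.card ι).factorial : ℝ)) *
        ((if x.2 then 1 else -1) * f (x.1 i) * ((if x.2 then 1 else -1) * f (x.1 j)))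
        = ∑ π : Equiv.Perm ι, f (π i) * f (π j) / (Fintype.card ι).factorial := by
      simp only [Fintype.sum_prod_type, Fintype.sum_bool]
      congr! 1 with π
      simp; ring
    rw [hsum, ← sum_div, div_eq_div_iff (by positivity) hN]
    linear_combination h

theorem IsEquicorrelation.exists_bernoulli {ι : Type*} {ρ : ℝ} (h : IsEquicorrelation ι ρ) :
    ∃ (Ω : Type) (_ : MeasurableSpace Ω) (μ : Measure Ω) (_ : IsProbabilityMeasure μ)
      (X : ι → Ω → ℝ), (∀ i, Measurable (X i)) ∧ (∀ i ω, X i ω = 0 ∨ X i ω = 1) ∧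
      (∀ i, μ {ω | X i ω = 1} = 1 / 2) ∧
      (∀ i j, i ≠ j →
        (∫ ω, X i ω * X j ω ∂μ - (∫ ω, X i ω ∂μ) * (∫ ω, X j ω ∂μ)) / (1 / 4) = ρ) := by
  obtain ⟨Ω, _, w, Y, hw, hsum, hY, hmean, hcorr⟩ := h
  let _ : MeasurableSpace Ω := ⊤
  have : MeasurableSingletonClass Ω := ⟨fun _ => MeasurableSpace.measurableSet_top⟩
  let p : PMF Ω := PMF.ofFintype (fun ω => ENNReal.ofReal (w ω)) (by
    rw [← ENNReal.ofReal_sum_of_nonneg fun ω _ => hw ω, hsum, ENNReal.ofReal_one])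
  have hint : ∀ g : Ω → ℝ, ∫ ω, g ω ∂p.toMeasure = ∑ ω, w ω * g ω := fun g => by
    simp [p, PMF.integral_eq_sum, ENNReal.toReal_ofReal (hw _)]
  let X : ι → Ω → ℝ := fun i ω => (Y i ω + 1) / 2
  have hX01 : ∀ i ω, X i ω = 0 ∨ X i ω = 1 := fun i ω => by
    rcases hY i ω with h | h <;> simp [X, h]
  have hE : ∀ i, ∫ ω, X i ω ∂p.toMeasure = 1 / 2 := fun i => by
    simp only [hint, X, mul_div_assoc', mul_add, ← sum_div, sum_add_distrib, hmean, hsum, mul_one]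
    norm_num
  refine ⟨Ω, ⊤, p.toMeasure, inferInstance, X, fun i => measurable_from_top, hX01,
    fun i => ?_, fun i j hij => ?_⟩
  · rw [← ofReal_measureReal, ← integral_eq_measureReal_of_zero_or_one measurable_from_top (hX01 i),
      hE i, one_div, ENNReal.ofReal_inv_of_pos two_pos, ENNReal.ofReal_ofNat, one_div]
  · rw [cov_div_quarter_eq_integral .of_finite .of_finite .of_finite (hE i) (hE j), hint,
      ← hcorr i j hij]
    refine sum_congr rfl fun ω _ => ?_
    simp only [X]
    ring

theorem isEquicorrelation_of_mem_Icc {n : ℕ} (hn : 2 ≤ n) {ρ : ℝ}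
    (hρ : ρ ∈ Set.Icc (minCorrelation n) 1) : IsEquicorrelation (Fin n) ρ := by
  have hn' : (2 : ℝ) ≤ n := by exact_mod_cast hn
  have hone : IsEquicorrelation (Fin n) 1 := by
    convert isEquicorrelation_perm (ι := Fin n) (by simpa using hn) (fun _ => 1)
      (fun _ => Or.inr rfl)
    rw [Fintype.card_fin, eq_div_iff (by nlinarith)]
    simp
    ring
  have hmin : IsEquicorrelation (Fin n) (minCorrelation n) := by
    obtain ⟨S, -, hS⟩ := exists_subset_card_eq (s := (univ : Finset (Fin n))) (n := (n + 1) / 2)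
      (by simp; omega)
    convert isEquicorrelation_perm (ι := Fin n) (by simpa using hn)
      (fun i => if i ∈ S then 1 else -1) (fun i => by by_cases h : i ∈ S <;> simp [h])
    rw [sum_ite_mem_one_neg_one, hS, Fintype.card_fin, sq_two_mul_half_sub,
      eq_div_iff (by nlinarith), mul_comm, mul_minCorrelation hn]
  rw [← segment_eq_Icc (hρ.1.trans hρ.2)] at hρ
  exact (convex_setOf_isEquicorrelation _).segment_subset hmin hone hρ

theorem stmt_19 (n : ℕ) (hn : 2 ≤ n) :
    ({ρ : ℝ | ∃ (Ω : Type) (_ : MeasurableSpace Ω) (μ : Measure Ω)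
        (_ : IsProbabilityMeasure μ) (X : Fin n → Ω → ℝ),
        (∀ i, Measurable (X i)) ∧
        (∀ i ω, X i ω = 0 ∨ X i ω = 1) ∧
        (∀ i, μ {ω | X i ω = 1} = 1 / 2) ∧
        (∀ i j, i ≠ j →
          (∫ ω, X i ω * X j ω ∂μ - (∫ ω, X i ω ∂μ) * (∫ ω, X j ω ∂μ)) / (1 / 4) = ρ)}
      = Set.Icc (-(1 / (2 * (((n + 1) / 2 : ℕ) : ℝ) - 1))) 1) ∧
    (Even n →
      Set.Icc (-(1 / (2 * (((n + 1) / 2 : ℕ) : ℝ) - 1))) (1 : ℝ)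
        = Set.Icc (-(1 / ((n : ℝ) - 1))) 1) ∧
    (Odd n →
      Set.Icc (-(1 / (2 * (((n + 1) / 2 : ℕ) : ℝ) - 1))) (1 : ℝ)
        = Set.Icc (-(1 / (n : ℝ))) 1) := by
  refine ⟨?_, fun h => congrArg (Set.Icc · 1) (minCorrelation_of_even h),
    fun h => congrArg (Set.Icc · 1) (minCorrelation_of_odd h)⟩
  ext ρ
  constructor
  · rintro ⟨Ω, _, μ, _, X, hX, h01, hhalf, hcorr⟩
    have := mem_Icc_minCorrelation_of_bernoulli (by simpa using hn) hX h01 hhalf hcorr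
    rwa [Fintype.card_fin] at this
  · exact fun hρ => (isEquicorrelation_of_mem_Icc hn hρ).exists_bernoulli
end
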